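/- Let 0 < α < 1 and let U_{(1)} ≤ ... ≤ U_{(m)} be the order statistics of m i.i.d. Uniform([0,1]) variables. For any k ≤ m, with probability at least 1 - Õ(1/k + 1/k^{(1-α)/α}) (polylogarithmic factors in k allowed), it holds that ∑_{i=1}^{k} U_{(i)}^{-α} ≤ (2·3^α/(1-α)) · m^α · k^{1-α}. -/

import Mathlib

/-!
Put `i₀ = ⌊log₂ k⌋ + 1` and `δ = (i₀ / A)^{1/α} k^{-(1-α)/α} / m` with `A = (2·3^α - 6^α)/(1-α)`.
Outside an event of small probability, `U_(1) ≥ δ` and `U_(i) ≥ i/(6m)` for every `i > i₀`.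
A union bound over `i`-element subsets gives `P(U_(i) < i/(6m)) ≤ C(m,i) (i/(6m))^i ≤ 2^{-i}`,
so the second condition fails with probability at most `2^{-i₀} ≤ 1/k`, and the first with
probability at most `mδ`, which is `k^{-(1-α)/α}` times a power of `log k`.
On the good event the first `i₀` terms contribute at most `i₀ δ^{-α} = A m^α k^{1-α}`, and the
others at most `(6m)^α ∑ i^{-α} ≤ (6m)^α k^{1-α}/(1-α)` by comparison with `∫ x^{-α}`; the two
add up to `2·3^α/(1-α) · m^α k^{1-α}`.
-/

open MeasureTheory ProbabilityTheory Real Classical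

open Finset
open scoped ENNReal

theorem sum_range_add_one_rpow_neg_le {α : ℝ} (hα0 : 0 ≤ α) (hα1 : α < 1) (k : ℕ) :
    ∑ n ∈ range k, ((n : ℝ) + 1) ^ (-α) ≤ (k : ℝ) ^ (1 - α) / (1 - α) := by
  have h1α : 0 < 1 - α := by linarith
  rcases k with _ | j
  · simp [zero_rpow h1α.ne']
  have hint := AntitoneOn.sum_le_integral (x₀ := 1) (a := j) (f := fun x : ℝ => x ^ (-α))
    ((antitoneOn_rpow_Ioi_of_exponent_nonpos (by linarith)).mono
      fun x hx => lt_of_lt_of_le one_pos hx.1)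
  rw [integral_rpow (Or.inl (by linarith)), one_rpow, neg_add_eq_sub] at hint
  simp only [add_comm (1 : ℝ)] at hint
  rw [sum_range_succ', Nat.cast_succ]
  simp only [Nat.cast_zero, zero_add, one_rpow]
  calc ∑ n ∈ range j, (((n + 1 : ℕ) : ℝ) + 1) ^ (-α) + 1
      ≤ ((j + 1) ^ (1 - α) - 1) / (1 - α) + 1 / (1 - α) := by
        gcongr
        rw [le_div_iff₀ h1α]; linarith
    _ = (j + 1) ^ (1 - α) / (1 - α) := by ring

theorem Fin.sum_filter_val_lt {M : Type*} [AddCommMonoid M] {m k : ℕ} (hkm : k ≤ m) (f : ℕ → M) :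
    ∑ i ∈ univ.filter (fun i : Fin m => (i : ℕ) < k), f i = ∑ n ∈ range k, f n := by
  rw [sum_filter, Fin.sum_univ_eq_sum_range (fun n => if n < k then f n else 0), ← sum_filter]
  congr 1
  ext n
  simp only [mem_filter, mem_range]
  omega

theorem sum_range_ite_lt_le {i₀ k : ℕ} {d : ℝ} (hd : 0 ≤ d) :
    ∑ n ∈ range k, (if n < i₀ then d else 0) ≤ i₀ * d := by
  rw [← sum_filter, sum_const, nsmul_eq_mul]
  gcongr
  exact_mod_cast (card_le_card fun n hn => mem_range.2 (mem_filter.1 hn).2).trans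
    (card_range i₀).le

theorem sum_rpow_neg_le_of_head_tail {m k i₀ : ℕ} (hkm : k ≤ m) {α δ c : ℝ} (hα0 : 0 ≤ α)
    (hα1 : α < 1) (hδ : 0 < δ) (hc : 0 < c) {x : Fin m → ℝ}
    (hx : ∀ i : Fin m, (i : ℕ) < k → δ ≤ x i ∧ (i₀ ≤ (i : ℕ) → ((i : ℝ) + 1) / c ≤ x i)) :
    ∑ i ∈ univ.filter (fun i : Fin m => (i : ℕ) < k), x i ^ (-α)
      ≤ i₀ * δ ^ (-α) + c ^ α * ((k : ℝ) ^ (1 - α) / (1 - α)) := by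
  set g : ℕ → ℝ := fun n => (if n < i₀ then δ ^ (-α) else 0) + c ^ α * ((n : ℝ) + 1) ^ (-α)
  have hterm : ∀ i ∈ univ.filter (fun i : Fin m => (i : ℕ) < k), x i ^ (-α) ≤ g i := by
    intro i hi
    obtain ⟨hhead, htail⟩ := hx i (mem_filter.1 hi).2
    by_cases hi₀ : (i : ℕ) < i₀
    · simp only [g, if_pos hi₀]
      exact le_add_of_le_of_nonneg (rpow_le_rpow_of_nonpos hδ hhead (by linarith))
        (by positivity)
    · simp only [g, if_neg hi₀, zero_add]
      calc x i ^ (-α) ≤ (((i : ℝ) + 1) / c) ^ (-α) :=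
            rpow_le_rpow_of_nonpos (by positivity) (htail (not_lt.1 hi₀)) (by linarith)
        _ = c ^ α * ((i : ℝ) + 1) ^ (-α) := by
            rw [div_rpow (by positivity) hc.le, rpow_neg hc.le, div_inv_eq_mul, mul_comm]
  calc ∑ i ∈ univ.filter (fun i : Fin m => (i : ℕ) < k), x i ^ (-α)
      ≤ ∑ i ∈ univ.filter (fun i : Fin m => (i : ℕ) < k), g i := sum_le_sum hterm
    _ = ∑ n ∈ range k, (if n < i₀ then δ ^ (-α) else 0)
          + c ^ α * ∑ n ∈ range k, ((n : ℝ) + 1) ^ (-α) := by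
        rw [Fin.sum_filter_val_lt hkm g, sum_add_distrib, mul_sum]
    _ ≤ i₀ * δ ^ (-α) + c ^ α * ((k : ℝ) ^ (1 - α) / (1 - α)) := by
        gcongr
        · exact sum_range_ite_lt_le (by positivity)
        · exact sum_range_add_one_rpow_neg_le hα0 hα1 k

theorem Nat.choose_mul_div_pow_le_exp (m n : ℕ) : (m.choose n : ℝ) * (n / m) ^ n ≤ exp n := by
  rcases Nat.eq_zero_or_pos m with rfl | hm
  · rcases Nat.eq_zero_or_pos n with rfl | hn
    · simp
    · simp [Nat.choose_eq_zero_of_lt hn, exp_nonneg]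
  calc (m.choose n : ℝ) * (n / m) ^ n ≤ m ^ n / n.factorial * (n / m) ^ n := by
        gcongr; exact Nat.choose_le_pow_div n m
    _ = (n : ℝ) ^ n / n.factorial := by
        rw [div_pow]; field_simp
    _ ≤ exp n := pow_div_factorial_le_exp _ n.cast_nonneg n

theorem Nat.choose_mul_div_six_mul_pow_le (m n : ℕ) :
    (m.choose n : ℝ) * (n / (6 * m)) ^ n ≤ (1 / 2) ^ n := by
  calc (m.choose n : ℝ) * (n / (6 * m)) ^ n = (m.choose n : ℝ) * (n / m) ^ n / 6 ^ n := by
        rw [mul_comm (6 : ℝ), ← div_div, div_pow, mul_div_assoc]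
    _ ≤ exp 1 ^ n / 6 ^ n := by
        rw [← exp_nat_mul, mul_one]; gcongr; exact Nat.choose_mul_div_pow_le_exp m n
    _ ≤ (1 / 2) ^ n := by
        rw [← div_pow]
        exact pow_le_pow_left₀ (by positivity) (by linarith [exp_one_lt_d9]) n

theorem sum_Ico_half_pow_succ_le (i₀ m : ℕ) :
    ∑ n ∈ Ico i₀ m, (1 / 2 : ℝ) ^ (n + 1) ≤ (1 / 2) ^ i₀ := by
  calc ∑ n ∈ Ico i₀ m, (1 / 2 : ℝ) ^ (n + 1) = 1 / 2 * ∑ n ∈ Ico i₀ m, (1 / 2 : ℝ) ^ n := by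
        rw [mul_sum]; simp only [pow_succ']
    _ ≤ 1 / 2 * ((1 / 2) ^ i₀ / (1 - 1 / 2)) := by
        gcongr; exact geom_sum_Ico_le_of_lt_one (by norm_num) (by norm_num)
    _ = (1 / 2) ^ i₀ := by ring

theorem add_one_le_card_filter_le {β : Type*} [Preorder β] {m : ℕ} {x y : Fin m → β}
    (hx : Monotone x) (σ : Equiv.Perm (Fin m)) (hxy : ∀ i, x i = y (σ i)) {i : Fin m} {t : β}
    (ht : x i ≤ t) : (i : ℕ) + 1 ≤ #{j | y j ≤ t} := by
  rw [← Fin.card_Iic]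
  refine card_le_card_of_injOn σ (fun j hj => mem_filter.2 ⟨mem_univ _, ?_⟩) σ.injective.injOn
  rw [← hxy]
  exact (hx (mem_Iic.1 hj)).trans ht

theorem ProbabilityTheory.iIndepFun.measure_le_card_filter_mem_le {ι Ω β : Type*} [Fintype ι]
    [MeasurableSpace Ω] [MeasurableSpace β] {P : Measure Ω} {U : ι → Ω → β} (hU : iIndepFun U P)
    {s : Set β} (hs : MeasurableSet s) {p : ℝ≥0∞} (hp : ∀ j, P (U j ⁻¹' s) ≤ p) (n : ℕ) :
    P {ω | n ≤ #{j | U j ω ∈ s}} ≤ (Fintype.card ι).choose n * p ^ n := by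
  have hsub : {ω | n ≤ #{j | U j ω ∈ s}} ⊆ ⋃ S ∈ powersetCard n univ, ⋂ j ∈ S, U j ⁻¹' s := by
    intro ω hω
    obtain ⟨S, hS, hcard⟩ := exists_subset_card_eq hω
    refine Set.mem_biUnion (mem_powersetCard.2 ⟨subset_univ S, hcard⟩) (Set.mem_iInter₂.2 ?_)
    exact fun j hj => (mem_filter.1 (hS hj)).2
  calc P {ω | n ≤ #{j | U j ω ∈ s}}
      ≤ ∑ S ∈ powersetCard n (univ : Finset ι), P (⋂ j ∈ S, U j ⁻¹' s) :=
        (measure_mono hsub).trans (measure_biUnion_finset_le _ _)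
    _ ≤ ∑ S ∈ powersetCard n (univ : Finset ι), p ^ n := by
        refine sum_le_sum fun S hS => ?_
        rw [hU.meas_biInter fun j _ => ⟨s, hs, rfl⟩, ← (mem_powersetCard.1 hS).2]
        exact prod_le_pow_card _ _ _ fun j _ => hp j
    _ = (Fintype.card ι).choose n * p ^ n := by
        rw [sum_const, card_powersetCard, card_univ, nsmul_eq_mul]

theorem measure_preimage_Iic_le_of_map_eq_uniform {Ω : Type*} [MeasurableSpace Ω] {P : Measure Ω}
    {X : Ω → ℝ} (hX : P.map X = volume.restrict (Set.Icc 0 1)) (t : ℝ) :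
    P (X ⁻¹' Set.Iic t) ≤ ENNReal.ofReal t := by
  have hXm : AEMeasurable X P := AEMeasurable.of_map_ne_zero (by simp [hX])
  calc P (X ⁻¹' Set.Iic t) = volume (Set.Iic t ∩ Set.Icc 0 1) := by
        rw [← Measure.restrict_apply measurableSet_Iic, ← hX,
          Measure.map_apply_of_aemeasurable hXm measurableSet_Iic]
    _ ≤ volume (Set.Icc 0 t) := measure_mono fun x hx => ⟨hx.2.1, hx.1⟩
    _ = ENNReal.ofReal t := by rw [volume_Icc, sub_zero]

section UniformOrderStatistics

variable {Ω : Type*} [MeasurableSpace Ω] {P : Measure Ω} {m : ℕ} {U : Fin m → Ω → ℝ}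

theorem measure_le_card_filter_le_le (hU : iIndepFun U P)
    (hunif : ∀ i, P.map (U i) = volume.restrict (Set.Icc 0 1)) {t : ℝ} (ht : 0 ≤ t) (n : ℕ) :
    P {ω | n ≤ #{j | U j ω ≤ t}} ≤ ENNReal.ofReal (m.choose n * t ^ n) := by
  rw [ENNReal.ofReal_mul (by positivity), ENNReal.ofReal_natCast, ENNReal.ofReal_pow ht]
  simpa using hU.measure_le_card_filter_mem_le measurableSet_Iic
    (fun j => measure_preimage_Iic_le_of_map_eq_uniform (hunif j) t) n

theorem measure_exists_orderStat_lt_le (hU : iIndepFun U P)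
    (hunif : ∀ i, P.map (U i) = volume.restrict (Set.Icc 0 1)) {Uord : Ω → Fin m → ℝ}
    (hmono : ∀ ω, Monotone (Uord ω))
    (hperm : ∀ ω, ∃ σ : Equiv.Perm (Fin m), ∀ i, Uord ω i = U (σ i) ω) {δ : ℝ} (hδ : 0 ≤ δ)
    (i₀ : ℕ) :
    P {ω | ∃ i : Fin m, Uord ω i < δ ∨ i₀ ≤ (i : ℕ) ∧ Uord ω i < ((i : ℝ) + 1) / (6 * m)}
      ≤ ENNReal.ofReal (m * δ + (1 / 2) ^ i₀) := by
  have hsub : {ω | ∃ i : Fin m, Uord ω i < δ ∨ i₀ ≤ (i : ℕ) ∧ Uord ω i < ((i : ℝ) + 1) / (6 * m)}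
      ⊆ {ω | 1 ≤ #{j | U j ω ≤ δ}} ∪
        ⋃ n ∈ Ico i₀ m, {ω | n + 1 ≤ #{j | U j ω ≤ ((n + 1 : ℕ) : ℝ) / (6 * m)}} := by
    rintro ω ⟨i, hlow | ⟨hi₀, hlow⟩⟩ <;> obtain ⟨σ, hσ⟩ := hperm ω
    · exact Or.inl (le_add_self.trans (add_one_le_card_filter_le (hmono ω) σ hσ hlow.le))
    · refine Or.inr (Set.mem_biUnion (mem_Ico.2 ⟨hi₀, i.2⟩) ?_)
      exact add_one_le_card_filter_le (hmono ω) σ hσ (by push_cast; exact hlow.le)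
  calc _ ≤ P {ω | 1 ≤ #{j | U j ω ≤ δ}} +
        ∑ n ∈ Ico i₀ m, P {ω | n + 1 ≤ #{j | U j ω ≤ ((n + 1 : ℕ) : ℝ) / (6 * m)}} :=
        (measure_mono hsub).trans <| (measure_union_le _ _).trans <|
          add_le_add le_rfl (measure_biUnion_finset_le _ _)
    _ ≤ ENNReal.ofReal (m * δ) + ∑ n ∈ Ico i₀ m, ENNReal.ofReal ((1 / 2) ^ (n + 1)) := by
        gcongr with n
        · simpa using measure_le_card_filter_le_le hU hunif hδ 1
        · exact (measure_le_card_filter_le_le hU hunif (by positivity) _).trans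
            (ENNReal.ofReal_le_ofReal (Nat.choose_mul_div_six_mul_pow_le m (n + 1)))
    _ ≤ ENNReal.ofReal (m * δ + (1 / 2) ^ i₀) := by
        rw [← ENNReal.ofReal_sum_of_nonneg (fun n _ => by positivity),
          ← ENNReal.ofReal_add (by positivity) (by positivity)]
        gcongr
        exact sum_Ico_half_pow_succ_le i₀ m

end UniformOrderStatistics

theorem natLog_two_le_two_mul_log (k : ℕ) : (Nat.log 2 k : ℝ) ≤ 2 * log k := by
  calc (Nat.log 2 k : ℝ) ≤ logb 2 k := natLog_le_logb k 2
    _ = log k / log 2 := rfl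
    _ ≤ log k / (1 / 2) := by
        gcongr
        linarith [log_two_gt_d9]
    _ = 2 * log k := by ring

theorem one_div_two_pow_log_two_succ_le {k : ℕ} (hk : 1 ≤ k) :
    (1 / 2 : ℝ) ^ (Nat.log 2 k + 1) ≤ 1 / k := by
  rw [one_div_pow]
  exact one_div_le_one_div_of_le (by exact_mod_cast hk)
    (by exact_mod_cast (Nat.lt_pow_succ_log_self one_lt_two k).le)

theorem div_rpow_inv_le_mul_rpow {α A L x : ℝ} (hα : 0 ≤ α) (hA : 0 ≤ A) (hL : 1 ≤ L)
    (hx0 : 0 ≤ x) (hx : x ≤ 2 * L) :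
    (x / A) ^ α⁻¹ ≤ (α⁻¹ + (2 / A) ^ α⁻¹) * L ^ (α⁻¹ + (2 / A) ^ α⁻¹) := by
  have hC : α⁻¹ ≤ α⁻¹ + (2 / A) ^ α⁻¹ := le_add_of_nonneg_right (by positivity)
  calc (x / A) ^ α⁻¹ ≤ (2 / A * L) ^ α⁻¹ := by
        rw [div_mul_eq_mul_div, mul_comm 2 L]; gcongr; linarith
    _ = (2 / A) ^ α⁻¹ * L ^ α⁻¹ := mul_rpow (by positivity) (by linarith)
    _ ≤ (α⁻¹ + (2 / A) ^ α⁻¹) * L ^ (α⁻¹ + (2 / A) ^ α⁻¹) := by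
        gcongr
        exact le_add_of_nonneg_left (by positivity)

theorem div_rpow_inv_div_rpow_add_half_pow_le {α A : ℝ} (hα0 : 0 < α) (hα1 : α ≤ 1) (hA : 0 ≤ A)
    {k : ℕ} (hk : 1 ≤ k) :
    ((Nat.log 2 k + 1 : ℕ) / A) ^ α⁻¹ / (k : ℝ) ^ ((1 - α) / α) + (1 / 2) ^ (Nat.log 2 k + 1)
      ≤ (α⁻¹ + (2 / A) ^ α⁻¹) * (log k + 2) ^ (α⁻¹ + (2 / A) ^ α⁻¹)
        * (1 / k + 1 / (k : ℝ) ^ ((1 - α) / α)) := by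
  set C := α⁻¹ + (2 / A) ^ α⁻¹
  have hlog : 0 ≤ log k := log_natCast_nonneg k
  have hi₀ : ((Nat.log 2 k + 1 : ℕ) : ℝ) ≤ 2 * (log k + 2) := by
    push_cast; linarith [natLog_two_le_two_mul_log k]
  have hC : 1 ≤ C * (log k + 2) ^ C := by
    have : 1 ≤ C := (one_le_inv₀ hα0).2 hα1 |>.trans (le_add_of_nonneg_right (by positivity))
    exact one_le_mul_of_one_le_of_one_le this (one_le_rpow (by linarith) (by linarith))
  calc _ ≤ C * (log k + 2) ^ C / (k : ℝ) ^ ((1 - α) / α) + C * (log k + 2) ^ C * (1 / k) := by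
        gcongr
        · exact div_rpow_inv_le_mul_rpow hα0.le hA (by linarith) (by positivity) hi₀
        · exact (one_div_two_pow_log_two_succ_le hk).trans
            (le_mul_of_one_le_left (by positivity) hC)
    _ = _ := by ring

theorem six_rpow_lt_two_mul_three_rpow {α : ℝ} (hα1 : α < 1) : (6 : ℝ) ^ α < 2 * 3 ^ α := by
  have h2 : (2 : ℝ) ^ α < 2 := by simpa using rpow_lt_rpow_of_exponent_lt one_lt_two hα1
  rw [show (6 : ℝ) = 2 * 3 by norm_num, mul_rpow (by norm_num) (by norm_num)]
  exact mul_lt_mul_of_pos_right h2 (by positivity)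

theorem mul_rpow_inv_div_rpow_div_rpow_neg {α a A k m : ℝ} (hα : α ≠ 0) (ha : 0 < a) (hA : 0 < A)
    (hk : 0 < k) (hm : 0 < m) :
    a * ((a / A) ^ α⁻¹ / k ^ ((1 - α) / α) / m) ^ (-α) = A * m ^ α * k ^ (1 - α) := by
  have hkα : (k ^ ((1 - α) / α)) ^ α = k ^ (1 - α) := by
    rw [← rpow_mul hk.le, div_mul_cancel₀ _ hα]
  rw [rpow_neg (by positivity), div_rpow (by positivity) hm.le,
    div_rpow (by positivity) (by positivity), rpow_inv_rpow (by positivity) hα, hkα]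
  field_simp

/-- High-probability bound on `∑_{i=1}^k U_{(i)}^{-α}` for uniform order statistics,
with failure probability `Õ(1/k + 1/k^{(1-α)/α})`. -/
theorem uniform_order_statistics_inverse_power_sum (α : ℝ) (hα0 : 0 < α) (hα1 : α < 1) :
    ∃ C : ℝ, 0 < C ∧
      ∀ (Ω : Type) (_ : MeasurableSpace Ω) (P : Measure Ω), IsProbabilityMeasure P →
        ∀ (m k : ℕ), 1 ≤ k → k ≤ m →
          ∀ (U : Fin m → Ω → ℝ),
            iIndepFun U P →
            (∀ i, Measure.map (U i) P = volume.restrict (Set.Icc (0:ℝ) 1)) →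
            ∀ (Uord : Ω → Fin m → ℝ),
              (∀ ω, Monotone (Uord ω)) →
              (∀ ω, ∃ σ : Equiv.Perm (Fin m), ∀ i, Uord ω i = U (σ i) ω) →
              P {ω | ∑ i ∈ Finset.univ.filter (fun i : Fin m => (i : ℕ) < k),
                    (Uord ω i) ^ (-α)
                  ≤ 2 * 3 ^ α / (1 - α) * (m : ℝ) ^ α * (k : ℝ) ^ (1 - α)}
                ≥ 1 - ENNReal.ofReal
                    (C * (Real.log k + 2) ^ C * (1 / k + 1 / (k : ℝ) ^ ((1 - α) / α))) := by
  set A := (2 * 3 ^ α - 6 ^ α) / (1 - α)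
  have hA : 0 < A := div_pos (sub_pos.2 (six_rpow_lt_two_mul_three_rpow hα1)) (by linarith)
  refine ⟨α⁻¹ + (2 / A) ^ α⁻¹, by positivity, ?_⟩
  intro Ω _ P _ m k hk hkm U hU hunif Uord hmono hperm
  have hmR : (0 : ℝ) < m := by exact_mod_cast hk.trans hkm
  set i₀ := Nat.log 2 k + 1
  set δ := ((i₀ : ℝ) / A) ^ α⁻¹ / (k : ℝ) ^ ((1 - α) / α) / m
  set B := {ω | ∃ i : Fin m, Uord ω i < δ ∨ i₀ ≤ (i : ℕ) ∧ Uord ω i < ((i : ℝ) + 1) / (6 * m)}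
  refine le_trans ?_ (measure_mono (s := Bᶜ) fun ω hω => ?_)
  · have hbad := measure_exists_orderStat_lt_le hU hunif hmono hperm (by positivity : 0 ≤ δ) i₀
    rw [mul_div_cancel₀ _ hmR.ne'] at hbad
    calc _ ≤ 1 - P B := tsub_le_tsub_left (hbad.trans (ENNReal.ofReal_le_ofReal
          (div_rpow_inv_div_rpow_add_half_pow_le hα0 hα1.le hA.le hk))) 1
      _ ≤ P Bᶜ := tsub_le_iff_left.2 (by simpa using measure_univ_le_add_compl (μ := P) B)
  · simp only [B, Set.mem_compl_iff, Set.mem_ofPred_eq, not_exists, not_or, not_and, not_lt] at hω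
    calc _ ≤ i₀ * δ ^ (-α) + (6 * m) ^ α * ((k : ℝ) ^ (1 - α) / (1 - α)) :=
          sum_rpow_neg_le_of_head_tail hkm hα0.le hα1 (by positivity) (by positivity)
            fun i _ => hω i
      _ = _ := by
          rw [mul_rpow_inv_div_rpow_div_rpow_neg hα0.ne' (by positivity) hA (by positivity) hmR,
            mul_rpow (by norm_num) hmR.le]
          field_simp
          ring
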